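/- arXiv:2308.14864 — 2 statements merged into one kernel-verified Lean document; each statement's English description precedes it below -/
import Mathlib

section
/- In the state space model with fixed observations, define the twisted unnormalized targets γ_t(x_{1:t}) = Γ_t(x_{1:t}) · L_t(x_t) for 1 ≤ t ≤ T (the filtering prefix density multiplied by the optimal twist, i.e. the lookahead function). Then for every t with 1 ≤ t ≤ T, the normalizing constant of the twisted target equals the marginal likelihood: ∫_{E^t} γ_t(x_{1:t}) dμ^{⊗t}(x_{1:t}) = Z (an identity in [0,∞]). Consequently, when 0 < Z < ∞, the normalized twisted target γ_t/Z is exactly the posterior density of the latent prefix x_{1:t} given the full observation sequence y_{1:T}. -/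
open MeasureTheory ENNReal

/-- The unnormalized filtering prefix density `Γ_{k+1}` of a state space model with fixed
observations: latents are 0-based, the prefix has `k+1` latents, `m1 x₁` represents
`p(x₁) p(y₁ | x₁)` and `mstep s x x'` represents `p(x_{s+1} | x_s) p(y_{s+1} | x_{s+1})`
evaluated at `(x, x')` (0-based transition index `s`). -/
noncomputable def prefDen {E : Type*} (m1 : E → ℝ≥0∞) (mstep : ℕ → E → E → ℝ≥0∞)
    (k : ℕ) (u : Fin (k+1) → E) : ℝ≥0∞ :=
  m1 (u 0) * ∏ s : Fin k, mstep (s : ℕ) (u s.castSucc) (u s.succ)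

/-- The lookahead function `L` at 0-based latent index `k` with `j` remaining latents:
`look μ mstep k j a = ∫_{E^j} ∏_{s<j} mstep (k+s) (path s) (path (s+1)) dμ^{⊗j}` where the
path starts at `a` and continues through the integration variables.  (For `j = 0` this is
the integral of the empty product over a one-point product space, i.e. `1 = L_T`.) -/
noncomputable def look {E : Type*} [MeasurableSpace E] (μ : Measure E)
    (mstep : ℕ → E → E → ℝ≥0∞) (k j : ℕ) (a : E) : ℝ≥0∞ :=
  ∫⁻ z : Fin j → E,
      ∏ s : Fin j, mstep (k + (s : ℕ)) ((Fin.cons a z : Fin (j+1) → E) s.castSucc)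
        ((Fin.cons a z : Fin (j+1) → E) s.succ)
    ∂(Measure.pi fun _ : Fin j => μ)

/-- Concatenation of a prefix of `k+1` latents with a suffix of `j` latents into a full
trajectory of `k+j+1` latents. -/
def appT {E : Type*} {k j : ℕ} (u : Fin (k+1) → E) (z : Fin j → E) :
    Fin (k+j+1) → E :=
  fun i => Fin.append u z (Fin.cast (by omega) i)

/-! Concatenating a prefix `u` of `k+1` latents with a suffix `z` of `j` latents, the full
density factorizes as `Γ_{k+1}(u)` times the integrand of the lookahead function at `u_k`, so
`Γ_{k+1}(u) · L(u_k)` is the marginal of `Γ_T` over the future latents. Integrating out `u`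
as well gives `Z` by Tonelli, because concatenation carries `μ^{⊗(k+1)} ⊗ μ^{⊗j}` to
`μ^{⊗(k+j+1)}`. -/

theorem Measurable.comp₂ {α β γ δ : Type*} [MeasurableSpace α] [MeasurableSpace β]
    [MeasurableSpace γ] [MeasurableSpace δ] {f : β → γ → δ} (hf : Measurable (Function.uncurry f))
    {g : α → β} {h : α → γ} (hg : Measurable g) (hh : Measurable h) :
    Measurable fun a => f (g a) (h a) :=
  hf.comp (hg.prodMk hh)

section Concatenation

variable {E : Type*} {k j : ℕ}

theorem appT_apply_of_lt (u : Fin (k+1) → E) (z : Fin j → E) (i : Fin (k+j+1))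
    (h : (i : ℕ) < k+1) : appT u z i = u ⟨i, h⟩ := by
  have hi : Fin.cast (by omega) i = Fin.castAdd j (⟨i, h⟩ : Fin (k+1)) := rfl
  rw [appT, hi, Fin.append_left]

theorem appT_apply_eq_cons (u : Fin (k+1) → E) (z : Fin j → E) (i : Fin (j+1))
    (m : Fin (k+j+1)) (h : (m : ℕ) = k + i) :
    appT u z m = (Fin.cons (u (Fin.last k)) z : Fin (j+1) → E) i := by
  induction i using Fin.cases with
  | zero =>
    rw [appT_apply_of_lt u z m (by simp at h; omega), Fin.cons_zero]
    exact congrArg u (Fin.ext (by simpa using h))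
  | succ t =>
    have hm : Fin.cast (by omega) m = Fin.natAdd (k+1) t := Fin.ext (by simp at h ⊢; omega)
    rw [appT, hm, Fin.append_right, Fin.cons_succ]

end Concatenation

section Integration

variable {E : Type*} [MeasurableSpace E] (μ : Measure E)

theorem measurePreserving_comp_finCast {m n : ℕ} (h : n = m) :
    MeasurePreserving (fun x : Fin m → E => x ∘ Fin.cast h)
      (Measure.pi fun _ : Fin m => μ) (Measure.pi fun _ : Fin n => μ) := by
  subst h
  exact MeasurePreserving.id _

variable [SigmaFinite μ]

theorem measurePreserving_finAppend (m n : ℕ) :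
    MeasurePreserving (fun p : (Fin m → E) × (Fin n → E) => Fin.append p.1 p.2)
      ((Measure.pi fun _ : Fin m => μ).prod (Measure.pi fun _ : Fin n => μ))
      (Measure.pi fun _ : Fin (m + n) => μ) := by
  have happend : (fun p : (Fin m → E) × (Fin n → E) => Fin.append p.1 p.2)
      = MeasurableEquiv.piCongrLeft (fun _ => E) finSumFinEquiv
          ∘ (MeasurableEquiv.sumPiEquivProdPi fun _ : Fin m ⊕ Fin n => E).symm := by
    funext p i
    obtain ⟨s, rfl⟩ := finSumFinEquiv.surjective i
    rw [Function.comp_apply, MeasurableEquiv.piCongrLeft_apply_apply,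
      MeasurableEquiv.coe_sumPiEquivProdPi_symm, Equiv.sumPiEquivProdPi_symm_apply]
    cases s <;> simp
  rw [happend]
  exact (measurePreserving_piCongrLeft _ _).comp
    (measurePreserving_sumPiEquivProdPi_symm fun _ : Fin m ⊕ Fin n => μ)

theorem measurePreserving_appT (k j : ℕ) :
    MeasurePreserving (fun p : (Fin (k+1) → E) × (Fin j → E) => appT p.1 p.2)
      ((Measure.pi fun _ : Fin (k+1) => μ).prod (Measure.pi fun _ : Fin j => μ))
      (Measure.pi fun _ : Fin (k+j+1) => μ) :=
  (measurePreserving_comp_finCast μ _).comp (measurePreserving_finAppend μ (k+1) j)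

theorem lintegral_eq_lintegral_lintegral_appT (k j : ℕ) {f : (Fin (k+j+1) → E) → ℝ≥0∞}
    (hf : Measurable f) :
    ∫⁻ x, f x ∂(Measure.pi fun _ : Fin (k+j+1) => μ)
      = ∫⁻ u, ∫⁻ z, f (appT u z) ∂(Measure.pi fun _ : Fin j => μ)
          ∂(Measure.pi fun _ : Fin (k+1) => μ) := by
  have happ := measurePreserving_appT μ k j
  rw [← happ.lintegral_comp hf]
  exact lintegral_prod _ (hf.comp happ.measurable).aemeasurable

end Integration

section Density

variable {E : Type*} {k j : ℕ}

theorem prefDen_appT (m1 : E → ℝ≥0∞) (mstep : ℕ → E → E → ℝ≥0∞)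
    (u : Fin (k+1) → E) (z : Fin j → E) :
    prefDen m1 mstep (k+j) (appT u z)
      = prefDen m1 mstep k u * ∏ s : Fin j, mstep (k + s)
          ((Fin.cons (u (Fin.last k)) z : Fin (j+1) → E) s.castSucc)
          ((Fin.cons (u (Fin.last k)) z : Fin (j+1) → E) s.succ) := by
  have hfirst : appT u z 0 = u 0 := appT_apply_of_lt u z 0 (by simp)
  have hprefix : ∀ s : Fin k,
      mstep (Fin.castAdd j s) (appT u z (Fin.castAdd j s).castSucc)
        (appT u z (Fin.castAdd j s).succ) = mstep s (u s.castSucc) (u s.succ) := by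
    intro s
    rw [appT_apply_of_lt u z _ (by simp), appT_apply_of_lt u z _ (by simp)]
    rfl
  have hsuffix : ∀ s : Fin j,
      mstep (Fin.natAdd k s) (appT u z (Fin.natAdd k s).castSucc)
        (appT u z (Fin.natAdd k s).succ)
      = mstep (k + s) ((Fin.cons (u (Fin.last k)) z : Fin (j+1) → E) s.castSucc)
          ((Fin.cons (u (Fin.last k)) z : Fin (j+1) → E) s.succ) := by
    intro s
    rw [appT_apply_eq_cons u z s.castSucc _ (by simp),
      appT_apply_eq_cons u z s.succ _ (by simp; omega)]
    rfl
  rw [prefDen, prefDen, Fin.prod_univ_add, hfirst]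
  simp only [hprefix, hsuffix]
  ring

theorem measurable_prefDen [MeasurableSpace E] (m1 : E → ℝ≥0∞) (mstep : ℕ → E → E → ℝ≥0∞)
    (hm1_meas : Measurable m1) (hmstep_meas : ∀ s, Measurable (Function.uncurry (mstep s)))
    (n : ℕ) : Measurable (prefDen m1 mstep n) :=
  (hm1_meas.comp (measurable_pi_apply 0)).mul <| Finset.measurable_prod _ fun s _ =>
    (hmstep_meas s).comp₂ (measurable_pi_apply _) (measurable_pi_apply _)

theorem prefDen_mul_look [MeasurableSpace E] (μ : Measure E) (m1 : E → ℝ≥0∞)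
    (mstep : ℕ → E → E → ℝ≥0∞) (hmstep_meas : ∀ s, Measurable (Function.uncurry (mstep s)))
    (u : Fin (k+1) → E) :
    prefDen m1 mstep k u * look μ mstep k j (u (Fin.last k))
      = ∫⁻ z, prefDen m1 mstep (k+j) (appT u z) ∂(Measure.pi fun _ : Fin j => μ) := by
  have hcons : ∀ i : Fin (j+1),
      Measurable fun z : Fin j → E => (Fin.cons (u (Fin.last k)) z : Fin (j+1) → E) i := by
    intro i
    induction i using Fin.cases with
    | zero => exact measurable_const
    | succ t => exact measurable_pi_apply t
  simp_rw [prefDen_appT]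
  rw [look]
  exact (lintegral_const_mul _ (Finset.measurable_prod _ fun s _ =>
    (hmstep_meas _).comp₂ (hcons _) (hcons _))).symm

end Density

theorem twisted_target_normalization_general
    {E : Type*} [MeasurableSpace E] (μ : Measure E) [SigmaFinite μ]
    (m1 : E → ℝ≥0∞) (mstep : ℕ → E → E → ℝ≥0∞)
    (hm1_meas : Measurable m1)
    (hmstep_meas : ∀ s, Measurable (Function.uncurry (mstep s)))
    (k j : ℕ)
    (Z : ℝ≥0∞)
    (hZ : Z = ∫⁻ x : Fin (k+j+1) → E, prefDen m1 mstep (k+j) x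
      ∂(Measure.pi fun _ : Fin (k+j+1) => μ)) :
    (∫⁻ u : Fin (k+1) → E, prefDen m1 mstep k u * look μ mstep k j (u (Fin.last k))
        ∂(Measure.pi fun _ : Fin (k+1) => μ)) = Z
    ∧ (0 < Z → Z ≠ ∞ → ∀ u : Fin (k+1) → E,
        (prefDen m1 mstep k u * look μ mstep k j (u (Fin.last k))) / Z
          = (∫⁻ z : Fin j → E, prefDen m1 mstep (k+j) (appT u z)
              ∂(Measure.pi fun _ : Fin j => μ)) / Z) := by
  have htwist := prefDen_mul_look (k := k) (j := j) μ m1 mstep hmstep_meas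
  refine ⟨?_, fun _ _ u => by rw [htwist u]⟩
  rw [hZ, lintegral_eq_lintegral_lintegral_appT μ k j
    (measurable_prefDen m1 mstep hm1_meas hmstep_meas (k+j))]
  exact lintegral_congr htwist

/-- **Normalization of the twisted targets.** In a state space model with fixed
observations, the twisted unnormalized target `γ_t(x_{1:t}) = Γ_t(x_{1:t}) · L_t(x_t)`
(filtering prefix density times the optimal twist, i.e. the lookahead function) has
normalizing constant equal to the marginal likelihood `Z` for every `1 ≤ t ≤ T` (here
`t = k+1` and `T = k+1+j` with `j ≥ 0`).  Consequently, when `0 < Z < ∞`, the normalized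
twisted target `γ_t / Z` is exactly the posterior density of the latent prefix `x_{1:t}`
given the full observation sequence, i.e. the marginal over the future latents of `Γ_T / Z`. -/
theorem twisted_target_normalization
    {E : Type*} [MeasurableSpace E] (μ : Measure E) [SigmaFinite μ]
    (m1 : E → ℝ≥0∞) (mstep : ℕ → E → E → ℝ≥0∞)
    (hm1_meas : Measurable m1) (hm1_fin : ∀ x, m1 x ≠ ∞)
    (hmstep_meas : ∀ s, Measurable (Function.uncurry (mstep s)))
    (hmstep_fin : ∀ s x x', mstep s x x' ≠ ∞)
    (k j : ℕ)
    (Z : ℝ≥0∞)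
    (hZ : Z = ∫⁻ x : Fin (k+j+1) → E, prefDen m1 mstep (k+j) x
      ∂(Measure.pi fun _ : Fin (k+j+1) => μ)) :
    (∫⁻ u : Fin (k+1) → E, prefDen m1 mstep k u * look μ mstep k j (u (Fin.last k))
        ∂(Measure.pi fun _ : Fin (k+1) => μ)) = Z
    ∧ (0 < Z → Z ≠ ∞ → ∀ u : Fin (k+1) → E,
        (prefDen m1 mstep k u * look μ mstep k j (u (Fin.last k))) / Z
          = (∫⁻ z : Fin j → E, prefDen m1 mstep (k+j) (appT u z)
              ∂(Measure.pi fun _ : Fin j => μ)) / Z) :=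
  twisted_target_normalization_general μ m1 mstep hm1_meas hmstep_meas k j Z hZ
end

section
/- Let μ be a σ-finite measure on a measurable space E, let a, b : E → [0,∞) be probability densities with respect to μ (∫a dμ = ∫b dμ = 1) with a(x) > 0 and b(x) > 0 for μ-a.e. x, and let ρ ∈ (0,1). Define σ(u) = 1/(1 + exp(−u)), and for measurable g : E → ℝ define the expected classification log-likelihood L(g) = ∫_E [ρ·a(x)·log(σ(g(x))) + (1−ρ)·b(x)·log(1−σ(g(x)))] dμ(x), whenever this integral is well defined (allowing the value −∞ when the negative part diverges). Define g*(x) = log(a(x)/b(x)) + log(ρ/(1−ρ)) on the set where a(x) > 0 and b(x) > 0 (and arbitrarily, say 0, elsewhere), and assume L(g*) is finite. Then for every measurable g : E → ℝ, L(g) ≤ L(g*); that is, the log density ratio shifted by the log prior odds maximizes the expected classification log-likelihood over all measurable classifiers. -/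
/-!
Pointwise, with `α = ρ a(x)` and `β = (1 - ρ) b(x)`, the integrand is `α log t + β log (1 - t)`
at `t = σ (g x) ∈ (0, 1)`. By `log y ≤ y - 1` this is maximized at
`t = α / (α + β)` (Gibbs' inequality for two outcomes), and `σ (g* x)` is exactly that value
because `g* x = log (α / β)`. Integrating the pointwise inequality gives the claim.
-/

open MeasureTheory ENNReal

namespace Real

lemma mul_log_div_le_sub {p q : ℝ} (hp : 0 < p) (hq : 0 < q) : p * log (q / p) ≤ q - p := by
  have h := mul_le_mul_of_nonneg_left (log_le_sub_one_of_pos (div_pos hq hp)) hp.le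
  rwa [mul_sub, mul_div_cancel₀ _ hp.ne', mul_one] at h

lemma mul_log_add_mul_log_one_sub_le {α β t : ℝ} (hα : 0 < α) (hβ : 0 < β)
    (ht₀ : 0 < t) (ht₁ : t < 1) :
    α * log t + β * log (1 - t) ≤ α * log (α / (α + β)) + β * log (β / (α + β)) := by
  have hs : 0 < α + β := add_pos hα hβ
  have hα' := mul_log_div_le_sub hα (mul_pos ht₀ hs)
  have hβ' := mul_log_div_le_sub hβ (mul_pos (sub_pos.2 ht₁) hs)
  rw [← div_div_eq_mul_div, log_div ht₀.ne' (by positivity)] at hα'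
  rw [← div_div_eq_mul_div, log_div (sub_pos.2 ht₁).ne' (by positivity)] at hβ'
  nlinarith

lemma sigmoid_log_div {α β : ℝ} (hα : 0 < α) (hβ : 0 < β) :
    sigmoid (log (α / β)) = α / (α + β) := by
  rw [sigmoid_def, ← log_inv, exp_log (by positivity), inv_div]
  field_simp

lemma one_sub_sigmoid_log_div {α β : ℝ} (hα : 0 < α) (hβ : 0 < β) :
    1 - sigmoid (log (α / β)) = β / (α + β) := by
  rw [← sigmoid_neg, ← log_inv, inv_div, sigmoid_log_div hβ hα, add_comm]

lemma mul_log_sigmoid_add_mul_log_one_sub_sigmoid_le {α β : ℝ} (hα : 0 < α) (hβ : 0 < β)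
    (u : ℝ) :
    α * log (sigmoid u) + β * log (1 - sigmoid u) ≤
      α * log (sigmoid (log (α / β))) + β * log (1 - sigmoid (log (α / β))) := by
  rw [one_sub_sigmoid_log_div hα hβ, sigmoid_log_div hα hβ]
  exact mul_log_add_mul_log_one_sub_le hα hβ (sigmoid_pos u) (sigmoid_lt_one u)

end Real

theorem dre_optimal_classifier_general
    {E : Type*} [MeasurableSpace E] (μ : Measure E)
    (a b : E → ℝ)
    (ha_pos : ∀ᵐ x ∂μ, 0 < a x) (hb_pos : ∀ᵐ x ∂μ, 0 < b x)
    (ρ : ℝ) (hρ : ρ ∈ Set.Ioo (0 : ℝ) 1)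
    (σ : ℝ → ℝ) (hσ : ∀ u, σ u = 1 / (1 + Real.exp (-u)))
    (gstar : E → ℝ)
    (hgstar : ∀ x, 0 < a x → 0 < b x →
      gstar x = Real.log (a x / b x) + Real.log (ρ / (1 - ρ)))
    (N : (E → ℝ) → ℝ≥0∞)
    (hN : ∀ g, N g = ∫⁻ x, ENNReal.ofReal
      (-(ρ * a x * Real.log (σ (g x)) + (1 - ρ) * b x * Real.log (1 - σ (g x)))) ∂μ) :
    ∀ g : E → ℝ, Measurable g → N gstar ≤ N g := by
  obtain ⟨hρ₀, hρ₁⟩ := hρ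
  have hσ_eq : σ = Real.sigmoid := funext fun u => by rw [hσ, one_div, Real.sigmoid_def]
  intro g _
  rw [hN, hN, hσ_eq]
  refine lintegral_mono_ae ?_
  filter_upwards [ha_pos, hb_pos] with x hax hbx
  have hα : 0 < ρ * a x := mul_pos hρ₀ hax
  have hβ : 0 < (1 - ρ) * b x := mul_pos (sub_pos.2 hρ₁) hbx
  have hgstar_x : gstar x = Real.log (ρ * a x / ((1 - ρ) * b x)) := by
    rw [hgstar x hax hbx, ← Real.log_mul (by positivity) (by positivity)]
    congr 1
    field_simp
  refine ENNReal.ofReal_le_ofReal (neg_le_neg ?_)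
  rw [hgstar_x]
  exact Real.mul_log_sigmoid_add_mul_log_one_sub_sigmoid_le hα hβ (g x)

/-- **The shifted log density ratio maximizes the expected classification log-likelihood.**
Since `σ (g x) ∈ (0,1)`, the integrand
`ρ a x log (σ (g x)) + (1 - ρ) b x log (1 - σ (g x))` is nonpositive, so the expected
classification log-likelihood `L g` is always well defined with values in `[-∞, 0]`; we
encode it as `L g = -(N g)` where
`N g = ∫⁻ x, ENNReal.ofReal (-(ρ a x log (σ (g x)) + (1 - ρ) b x log (1 - σ (g x)))) dμ`
takes values in `[0, ∞]`.  If `g* = log (a/b) + log (ρ/(1-ρ))` where `a, b > 0` (and `0`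
elsewhere) and `L g*` is finite (`N g* < ∞`), then `L g ≤ L g*`, i.e. `N g* ≤ N g`, for
every measurable `g`. -/
theorem dre_optimal_classifier
    {E : Type*} [MeasurableSpace E] (μ : Measure E) [SigmaFinite μ]
    (a b : E → ℝ) (ha_meas : Measurable a) (hb_meas : Measurable b)
    (ha_nonneg : ∀ x, 0 ≤ a x) (hb_nonneg : ∀ x, 0 ≤ b x)
    (ha_prob : ∫ x, a x ∂μ = 1) (hb_prob : ∫ x, b x ∂μ = 1)
    (ha_pos : ∀ᵐ x ∂μ, 0 < a x) (hb_pos : ∀ᵐ x ∂μ, 0 < b x)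
    (ρ : ℝ) (hρ : ρ ∈ Set.Ioo (0 : ℝ) 1)
    (σ : ℝ → ℝ) (hσ : ∀ u, σ u = 1 / (1 + Real.exp (-u)))
    (gstar : E → ℝ)
    (hgstar : ∀ x, 0 < a x → 0 < b x →
      gstar x = Real.log (a x / b x) + Real.log (ρ / (1 - ρ)))
    (hgstar0 : ∀ x, ¬(0 < a x ∧ 0 < b x) → gstar x = 0)
    (N : (E → ℝ) → ℝ≥0∞)
    (hN : ∀ g, N g = ∫⁻ x, ENNReal.ofReal
      (-(ρ * a x * Real.log (σ (g x)) + (1 - ρ) * b x * Real.log (1 - σ (g x)))) ∂μ)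
    (hfin : N gstar < ∞) :
    ∀ g : E → ℝ, Measurable g → N gstar ≤ N g :=
  dre_optimal_classifier_general μ a b ha_pos hb_pos ρ hρ σ hσ gstar hgstar N hN
end
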